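/- arXiv:2501.16321 — 5 statements merged into one kernel-verified Lean document; each statement's English description precedes it below -/
import Mathlib

section
/- Let E be a supersingular elliptic curve over F_q with q = p^e and p > 3. Then for any isogeny ψ: E → E' defined over the algebraic closure, the kernel of ψ is defined over F_{q^m} for some m ∈ {1, 2, 3}. In particular, every isogeny between supersingular elliptic curves over F_q is defined over F_{q^6}. -/
/-- Let `E` be a supersingular elliptic curve over `𝔽_q`, `q = p^e`, `p > 3`.
We model the geometric points as an abelian group `A`, the `q`-power Frobenius as the
`ℤ`-linear endomorphism `π`, and the kernel of an isogeny `ψ : E → E'` as an arbitrary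
subgroup `K` of `A`; `K` is defined over `𝔽_{q^m}` iff it is stable under `π^m`.
CONTEXT hypotheses: `ℤ[π]` has no zero divisors (`hdom`, as `End(E)` embeds in a division
algebra), and (Waterhouse/Schoof) `π² − k√q·π + q = 0` with `k = 0` for odd `e` and
`k ∈ {0, ±1, ±2}` (`hWS`, with `s = k√q ∈ ℤ`).
Conclusion: every kernel is stable under `π^m` for some `m ∈ {1,2,3}`; in particular
every such kernel is stable under `π^6`, i.e. every isogeny between supersingular
curves over `𝔽_q` is defined over `𝔽_{q^6}`. -/
theorem supersingular_isogeny_field_of_definition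
    (p e : ℕ) (hp : p.Prime) (hp3 : 3 < p) (he : 0 < e) (q : ℕ) (hq : q = p ^ e)
    (A : Type*) [AddCommGroup A] (π : Module.End ℤ A)
    (hdom : ∀ f g : Polynomial ℤ,
      Polynomial.aeval π f * Polynomial.aeval π g = 0 →
        Polynomial.aeval π f = 0 ∨ Polynomial.aeval π g = 0)
    (hWS : ∃ k s : ℤ, (Odd e → k = 0) ∧
      (k = 0 ∨ k = 1 ∨ k = -1 ∨ k = 2 ∨ k = -2) ∧
      s ^ 2 = k ^ 2 * (q : ℤ) ∧ 0 ≤ s * k ∧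
      π ^ 2 - s • π + (q : ℤ) • (1 : Module.End ℤ A) = 0) :
    (∀ K : AddSubgroup A, ∃ m : ℕ, (m = 1 ∨ m = 2 ∨ m = 3) ∧
      ∀ x ∈ K, (π ^ m) x ∈ K) ∧
    (∀ K : AddSubgroup A, ∀ x ∈ K, (π ^ 6) x ∈ K) := by
  obtain ⟨k, s, hk0, hkc, hs2, hsk, heq⟩ := hWS
  have heq' : π ^ 2 = s • π - (q : ℤ) • (1 : Module.End ℤ A) := by
    rw [sub_add_eq_add_sub, sub_eq_zero] at heq
    rw [eq_sub_iff_add_eq, heq]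
  -- Case `k = ±1` (so `s² = q`): then `π³` is the scalar `-(s·q)`.
  have case1 : s * s = (q : ℤ) → π ^ 3 = (-(s * q)) • (1 : Module.End ℤ A) := by
    intro hq1
    have e1 : π ^ 3 = π ^ 2 * π := by rw [pow_succ]
    rw [e1, heq', sub_mul, smul_mul_assoc, smul_mul_assoc, one_mul, ← pow_two, heq']
    rw [smul_sub, smul_smul, smul_smul, hq1]
    module
  -- Case `k = ±2` (so `s² = 4q`): then `π` itself is the scalar `s/2`.
  have case2 : s ^ 2 = 4 * (q : ℤ) → ∃ t : ℤ, π = t • (1 : Module.End ℤ A) := by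
    intro hs4
    have hev : Even s := by
      have h2 : Even (s ^ 2) := by rw [hs4]; exact ⟨2 * q, by ring⟩
      exact (Int.even_pow.mp h2).1
    obtain ⟨t, ht⟩ := hev
    have hst : s = 2 * t := by omega
    have htq : t * t = (q : ℤ) := by
      rw [hst] at hs4
      have h4 : 4 * (t * t) = 4 * (q : ℤ) := by linear_combination hs4
      linarith
    have haev : Polynomial.aeval π (Polynomial.X - Polynomial.C t) =
        π - t • (1 : Module.End ℤ A) := by
      simp [Algebra.algebraMap_eq_smul_one]
    have hprod : Polynomial.aeval π (Polynomial.X - Polynomial.C t) *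
        Polynomial.aeval π (Polynomial.X - Polynomial.C t) = 0 := by
      rw [haev]
      have expand : (π - t • (1 : Module.End ℤ A)) * (π - t • (1 : Module.End ℤ A)) =
          π ^ 2 - s • π + (q : ℤ) • (1 : Module.End ℤ A) := by
        simp only [sub_mul, mul_sub, smul_mul_assoc, mul_smul_comm, one_mul, mul_one,
          smul_sub, smul_smul]
        rw [htq, hst, show π * π = π ^ 2 from (sq π).symm]
        module
      rw [expand, heq]
    refine ⟨t, ?_⟩
    rcases hdom _ _ hprod with h | h <;>
      · rw [haev, sub_eq_zero] at h; exact h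
  -- Key: `π^m` is an integer scalar for some `m ∈ {1,2,3}`, and hence so is `π^6`.
  have hkey : ∃ (m : ℕ) (n n6 : ℤ), (m = 1 ∨ m = 2 ∨ m = 3) ∧
      π ^ m = n • (1 : Module.End ℤ A) ∧ π ^ 6 = n6 • (1 : Module.End ℤ A) := by
    rcases hkc with hk | hk | hk | hk | hk
    · -- k = 0 : s = 0 and π² = -q
      have hs : s = 0 := by
        have h0 : s ^ 2 = 0 := by rw [hs2, hk]; ring
        exact pow_eq_zero_iff two_ne_zero |>.mp h0
      have h2 : π ^ 2 = (-(q : ℤ)) • (1 : Module.End ℤ A) := by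
        rw [heq', hs]; module
      refine ⟨2, -(q : ℤ), (-(q : ℤ)) ^ 3, by tauto, h2, ?_⟩
      rw [show (6 : ℕ) = 2 * 3 from rfl, pow_mul, h2, smul_pow, one_pow]
    · have h3 := case1 (by rw [hk] at hs2; linear_combination hs2)
      refine ⟨3, -(s * q), (-(s * q)) ^ 2, by tauto, h3, ?_⟩
      rw [show (6 : ℕ) = 3 * 2 from rfl, pow_mul, h3, smul_pow, one_pow]
    · have h3 := case1 (by rw [hk] at hs2; linear_combination hs2)
      refine ⟨3, -(s * q), (-(s * q)) ^ 2, by tauto, h3, ?_⟩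
      rw [show (6 : ℕ) = 3 * 2 from rfl, pow_mul, h3, smul_pow, one_pow]
    · obtain ⟨t, h1⟩ := case2 (by rw [hk] at hs2; linear_combination hs2)
      refine ⟨1, t, t ^ 6, by tauto, by rwa [pow_one], ?_⟩
      rw [h1, smul_pow, one_pow]
    · obtain ⟨t, h1⟩ := case2 (by rw [hk] at hs2; linear_combination hs2)
      refine ⟨1, t, t ^ 6, by tauto, by rwa [pow_one], ?_⟩
      rw [h1, smul_pow, one_pow]
  obtain ⟨m, n, n6, hm, hn, hn6⟩ := hkey
  constructor
  · intro K
    refine ⟨m, hm, fun x hx => ?_⟩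
    rw [hn]
    simpa using K.zsmul_mem hx n
  · intro K x hx
    rw [hn6]
    simpa using K.zsmul_mem hx n6
end

section
/- Let E be an elliptic curve over a finite field and α an endomorphism of E. Then |tr(α)| ≤ 2·√(deg α). -/
/-!
The degree is a positive-definite `ℤ`-valued quadratic form on `End(E)`, and the trace of `α`
is its polar form evaluated at `(α, 1)`. Hence the binary form
`deg (m α + n) = m² deg α + m n tr α + n²` is nonnegative on `ℤ²`, so its discriminant
`tr(α)² - 4 deg α` is nonpositive: this is Cauchy–Schwarz for the degree form.
-/

theorem sq_le_four_mul_mul_of_forall_nonneg {R : Type*} [CommRing R] [LinearOrder R]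
    [IsStrictOrderedRing R] {a b c : R}
    (h : ∀ m n : R, 0 ≤ a * m ^ 2 + b * m * n + c * n ^ 2) : b ^ 2 ≤ 4 * a * c := by
  have ha : 0 ≤ a := by simpa using h 1 0
  have hc : 0 ≤ c := by simpa using h 0 1
  have hac : 0 ≤ a * (4 * a * c - b ^ 2) := by linear_combination h b (-2 * a)
  have hca : 0 ≤ c * (4 * a * c - b ^ 2) := by linear_combination h (-2 * c) b
  rcases ha.lt_or_eq with ha | rfl
  · linarith [nonneg_of_mul_nonneg_right hac ha]
  rcases hc.lt_or_eq with hc | rfl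
  · linarith [nonneg_of_mul_nonneg_right hca hc]
  linarith [h 1 (-b)]

namespace QuadraticMap

/-- Over `ℤ`, additivity of the polar form in its first argument already makes it bilinear. -/
def ofPolarAddLeft {M N : Type*} [AddCommGroup M] [AddCommGroup N] (f : M → N)
    (toFun_smul : ∀ (a : ℤ) (x : M), f (a • x) = (a * a) • f x)
    (polar_add_left : ∀ x x' y : M, polar f (x + x') y = polar f x y + polar f x' y) :
    QuadraticMap ℤ M N :=
  ofPolar f toFun_smul polar_add_left fun a x y =>
    map_zsmul (AddMonoidHom.mk' (polar f · y) (polar_add_left · · y)) a x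

theorem polar_sq_le_four_mul {R M : Type*} [CommRing R] [LinearOrder R] [IsStrictOrderedRing R]
    [AddCommGroup M] [Module R M] (Q : QuadraticMap R M R) (hQ : ∀ x, 0 ≤ Q x) (x y : M) :
    polar Q x y ^ 2 ≤ 4 * Q x * Q y :=
  sq_le_four_mul_mul_of_forall_nonneg fun m n => by
    have h := hQ (m • x + n • y)
    rw [QuadraticMap.map_add Q, Q.map_smul, Q.map_smul, polar_smul_left, polar_smul_right] at h
    simp only [smul_eq_mul] at h
    linear_combination h

end QuadraticMap

/-- Let `E` be an elliptic curve over a finite field and `α ∈ End(E)`.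
Then `|tr(α)| ≤ 2·√(deg α)`.  We model `End(E)` as a ring `R` equipped with the degree
map `degm : R → ℤ`, which is a positive-definite quadratic form (CONTEXT): `degm x > 0`
for `x ≠ 0`, `degm (m • x) = m² · degm x`, the associated pairing
`B(x,y) = degm(x+y) − degm x − degm y` is biadditive, and `degm 1 = 1`.
The trace is `tr α = B(α, 1) = degm(α+1) − degm α − 1`. -/
theorem abs_trace_le_two_sqrt_deg
    (R : Type*) [Ring R]
    (degm : R → ℤ)
    (hpos : ∀ x : R, x ≠ 0 → 0 < degm x)
    (hsmul : ∀ (m : ℤ) (x : R), degm (m • x) = m ^ 2 * degm x)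
    (hbil : ∀ x y z : R,
      degm (x + y + z) - degm (x + y) - degm z =
        (degm (x + z) - degm x - degm z) + (degm (y + z) - degm y - degm z))
    (hone : degm 1 = 1)
    (α : R) (d t : ℤ)
    (hd : degm α = d)
    (ht : t = degm (α + 1) - d - 1) :
    |(t : ℝ)| ≤ 2 * Real.sqrt (d : ℝ) := by
  let Q := QuadraticMap.ofPolarAddLeft degm (fun m x => by rw [hsmul, smul_eq_mul, sq]) hbil
  have hQ : ∀ x, Q x = degm x := fun _ => rfl
  have hQ_nonneg : ∀ x, 0 ≤ Q x := fun x => by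
    rcases eq_or_ne x 0 with rfl | hx
    · exact Q.map_zero.ge
    · exact (hpos x hx).le
  have htrace : QuadraticMap.polar Q α 1 = t := by
    rw [QuadraticMap.polar, hQ, hQ, hQ, hd, hone, ht]
  have hdisc : t ^ 2 ≤ 4 * d := by
    simpa only [htrace, hQ, hd, hone, mul_one] using Q.polar_sq_le_four_mul hQ_nonneg α 1
  calc |(t : ℝ)| ≤ Real.sqrt (4 * d) := Real.abs_le_sqrt (by exact_mod_cast hdisc)
    _ = 2 * Real.sqrt d := by
      rw [Real.sqrt_mul zero_le_four, show (4 : ℝ) = 2 ^ 2 by norm_num, Real.sqrt_sq zero_le_two]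
end

section
/- Let E be an elliptic curve over F_q (char p > 3), ψ a separable F_q-isogeny from E of odd prime degree ℓ ≠ p with kernel polynomial h(x), and α ∈ End(E) with ker(α) ∩ ker(ψ) = {0}. If t is an integer with 0 ≤ t ≤ ℓ − 1 such that (α² + [deg α])(P) = t·α(P) for some nonzero point P ∈ ker(ψ), then tr(α) ≡ t (mod ℓ). -/
/-- Let `E` be an elliptic curve over `𝔽_q` (char `p > 3`), `ψ` a separable
`𝔽_q`-isogeny from `E` of odd prime degree `ℓ ≠ p` whose kernel `K` (a subgroup of order
`ℓ` of the group `A` of geometric points) and `α ∈ End(E)` with `ker α ∩ K = {0}`.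
The endomorphism `α` satisfies its characteristic equation
`α² − tr(α)·α + deg(α) = 0` on points (`hchar`).  If `0 ≤ t ≤ ℓ − 1` and
`(α² + [deg α])(P) = t·α(P)` for some nonzero `P ∈ K`, then `tr(α) ≡ t (mod ℓ)`. -/
theorem trace_mod_ell_of_eigen_relation
    (p ℓ : ℕ) (hp : p.Prime) (hp3 : 3 < p) (hℓ : ℓ.Prime) (hodd : Odd ℓ) (hℓp : ℓ ≠ p)
    (A : Type*) [AddCommGroup A] (α : A →+ A)
    (K : AddSubgroup A) (hK : Nat.card K = ℓ)
    (tα dα : ℤ)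
    (hchar : ∀ x : A, α (α x) + dα • x = tα • α x)
    (hker : ∀ x ∈ K, x ≠ 0 → α x ≠ 0)
    (t : ℤ) (ht0 : 0 ≤ t) (ht1 : t ≤ (ℓ : ℤ) - 1)
    (P : A) (hP : P ∈ K) (hPne : P ≠ 0)
    (heq : α (α P) + dα • P = t • α P) :
    tα ≡ t [ZMOD (ℓ : ℤ)] := by
  have hAPne : α P ≠ 0 := hker P hP hPne
  have hsub : (tα - t) • α P = 0 := by
    have := hchar P
    rw [heq] at this
    rw [sub_smul, this, sub_self]
  -- ℓ • P = 0
  have hℓP : (ℓ : ℤ) • P = 0 := by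
    have : ℓ • (⟨P, hP⟩ : K) = 0 := by
      rw [← hK]
      exact card_nsmul_eq_zero'
    have h2 : ℓ • P = 0 := by
      have := congrArg (Subtype.val) this
      simpa using this
    simpa [natCast_zsmul] using h2
  have hℓAP : (ℓ : ℤ) • α P = 0 := by
    rw [← map_zsmul α (ℓ : ℤ) P, hℓP, map_zero]
  -- order of α P divides ℓ, and α P ≠ 0, prime ⇒ order = ℓ
  have hord : addOrderOf (α P) = ℓ := by
    have hdvd : addOrderOf (α P) ∣ ℓ := by
      have := addOrderOf_dvd_of_nsmul_eq_zero (n := ℓ) (by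
        simpa [natCast_zsmul] using hℓAP)
      exact this
    rcases (Nat.Prime.eq_one_or_self_of_dvd hℓ _ hdvd) with h | h
    · exfalso; exact hAPne (AddMonoid.addOrderOf_eq_one_iff.mp h)
    · exact h
  have hdvd : (ℓ : ℤ) ∣ (tα - t) := by
    have := addOrderOf_dvd_iff_zsmul_eq_zero.mpr hsub
    rwa [hord] at this
  exact (Int.ModEq.symm (Int.modEq_iff_dvd.mpr (by simpa using hdvd)))
end

section
/- In the setting of restrictions to the kernel of an odd-prime-degree isogeny ψ of E: let φ, ρ: E → E' be isogenies, neither vanishing on any nonzero point of ker(ψ), with interpolating polynomials (a, b) and (c, d) respectively of degree less than deg h. If a(x_P) = c(x_P) at a single nonzero point P ∈ ker(ψ), then a = c identically and b = ±d. Moreover, if a ≠ c in F_q[x]/(h(x)), then a − c is invertible in F_q[x]/(h(x)). -/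
open Polynomial

/-!
A nonzero point `P` of the kernel generates it, since its order is prime. So once `φ P = ±ρ P`,
which is what `a(x_P) = c(x_P)` gives, `φ = ±ρ` on the whole kernel, and the interpolating
polynomials of `φ` and `±ρ` agree at every root of `h`. As `h` is squarefree and split, two
polynomials of degree `< deg h` agreeing at its roots are equal. Consequently `a - c` has no root
in common with `h` unless `a = c`, which makes it coprime to `h`.
-/

theorem Polynomial.nodup_roots_of_squarefree {R : Type*} [CommRing R] [IsDomain R] {p : R[X]}
    (hp : Squarefree p) : p.roots.Nodup := by
  classical
  refine Multiset.nodup_iff_count_le_one.mpr fun z => ?_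
  rw [count_roots]
  by_contra! hmult
  refine not_isUnit_X_sub_C z (hp _ ?_)
  rw [← sq]
  exact (pow_dvd_pow _ hmult).trans (pow_rootMultiplicity_dvd p z)

section RootsInExtension

variable {F Ω : Type*} [Field F] [Field Ω] [Algebra F Ω] {h p q : F[X]}

theorem Polynomial.dvd_of_forall_aeval_eq_zero (hsep : Squarefree (h.map (algebraMap F Ω)))
    (hsplit : Splits (h.map (algebraMap F Ω)))
    (hp : ∀ z : Ω, aeval z h = 0 → aeval z p = 0) : h ∣ p := by
  rcases eq_or_ne p 0 with rfl | hp0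
  · exact dvd_zero h
  rw [← map_dvd_map' (algebraMap F Ω)]
  refine hsplit.dvd_of_roots_le_roots hsep.ne_zero
    ((Multiset.le_iff_subset (nodup_roots_of_squarefree hsep)).mpr fun z hz => ?_)
  rw [mem_roots hsep.ne_zero, IsRoot, eval_map_algebraMap] at hz
  rw [mem_roots (map_ne_zero hp0), IsRoot, eval_map_algebraMap]
  exact hp z hz

theorem Polynomial.eq_of_degree_lt_of_forall_aeval_eq
    (hsep : Squarefree (h.map (algebraMap F Ω))) (hsplit : Splits (h.map (algebraMap F Ω)))
    (hp : p.degree < h.degree) (hq : q.degree < h.degree)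
    (hpq : ∀ z : Ω, aeval z h = 0 → aeval z p = aeval z q) : p = q :=
  sub_eq_zero.mp <| eq_zero_of_dvd_of_degree_lt
    (dvd_of_forall_aeval_eq_zero hsep hsplit fun z hz => by rw [map_sub, hpq z hz, sub_self])
    ((degree_sub_le p q).trans_lt (max_lt hp hq))

theorem Polynomial.isCoprime_of_forall_aeval_ne_zero (hh : h ≠ 0)
    (hsplit : Splits (h.map (algebraMap F Ω)))
    (hp : ∀ z : Ω, aeval z h = 0 → aeval z p ≠ 0) : IsCoprime p h := by
  refine EuclideanDomain.isCoprime_of_dvd (fun hph => hh hph.2) fun g hgu _ hgp hgh => ?_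
  obtain ⟨z, hz⟩ := (hsplit.of_dvd (map_ne_zero hh) (map_dvd _ hgh)).exists_eval_eq_zero
    (by rw [degree_map]; exact fun hg => hgu (isUnit_iff_degree_eq_zero.mpr hg))
  rw [eval_map_algebraMap] at hz
  exact hp z (aeval_eq_zero_of_dvd_aeval_eq_zero hgh hz)
    (aeval_eq_zero_of_dvd_aeval_eq_zero hgp hz)

end RootsInExtension

theorem IsCoprime.isUnit_quotient_mk_span_singleton {R : Type*} [CommRing R] {x y : R}
    (hxy : IsCoprime x y) : IsUnit (Ideal.Quotient.mk (Ideal.span {y}) x) := by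
  obtain ⟨u, v, huv⟩ := hxy
  refine IsUnit.of_mul_eq_one (Ideal.Quotient.mk _ u) ?_
  rw [← map_mul, ← map_one (Ideal.Quotient.mk _), Ideal.Quotient.eq, Ideal.mem_span_singleton]
  exact ⟨-v, by linear_combination huv⟩

theorem AddMonoidHom.eq_of_apply_eq_of_prime_card {A B : Type*} [AddGroup A] [AddMonoid B]
    {ℓ : ℕ} [Fact ℓ.Prime] (hA : Nat.card A = ℓ) {φ ρ : A →+ B} {P : A} (hP : P ≠ 0)
    (hφρ : φ P = ρ P) : φ = ρ :=
  eq_of_eqOn_dense (s := {P})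
    (by rw [← AddSubgroup.zmultiples_eq_closure, zmultiples_eq_top_of_prime_card hA hP])
    (Set.eqOn_singleton.mpr hφρ)

section Interpolation

variable {F Ω A B : Type*} [Field F] [Field Ω] [Algebra F Ω] [Zero A]
  {ι : A → Ω × Ω} {ιB : B → Ω × Ω}

def Interpolates (ι : A → Ω × Ω) (ιB : B → Ω × Ω) (φ : A → B) (a b : F[X]) : Prop :=
  ∀ P : A, P ≠ 0 → ιB (φ P) = (aeval (ι P).1 a, aeval (ι P).1 b * (ι P).2)

theorem Interpolates.neg [Neg B] (hBneg : ∀ Q : B, ιB (-Q) = ((ιB Q).1, -(ιB Q).2))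
    {φ : A → B} {a b : F[X]} (hφ : Interpolates ι ιB φ a b) :
    Interpolates ι ιB (-φ) a (-b) := fun P hP => by
  rw [Pi.neg_apply, hBneg, hφ P hP, map_neg, neg_mul]

theorem Interpolates.unique {h : F[X]} (hsep : Squarefree (h.map (algebraMap F Ω)))
    (hsplit : Splits (h.map (algebraMap F Ω)))
    (hcover : ∀ z : Ω, aeval z h = 0 → ∃ P : A, P ≠ 0 ∧ (ι P).1 = z)
    (hy : ∀ P : A, P ≠ 0 → (ι P).2 ≠ 0) {φ : A → B} {a b c d : F[X]}
    (ha : a.degree < h.degree) (hb : b.degree < h.degree)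
    (hc : c.degree < h.degree) (hd : d.degree < h.degree)
    (hab : Interpolates ι ιB φ a b) (hcd : Interpolates ι ιB φ c d) : a = c ∧ b = d := by
  have eq_of_agree : ∀ p q : F[X], p.degree < h.degree → q.degree < h.degree →
      (∀ P : A, P ≠ 0 → aeval (ι P).1 p = aeval (ι P).1 q) → p = q :=
    fun p q hp hq hpq => eq_of_degree_lt_of_forall_aeval_eq hsep hsplit hp hq fun z hz => by
      obtain ⟨P, hP, rfl⟩ := hcover z hz
      exact hpq P hP
  have hcoord : ∀ P : A, P ≠ 0 → aeval (ι P).1 a = aeval (ι P).1 c ∧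
      aeval (ι P).1 b * (ι P).2 = aeval (ι P).1 d * (ι P).2 :=
    fun P hP => Prod.mk.inj ((hab P hP).symm.trans (hcd P hP))
  exact ⟨eq_of_agree a c ha hc fun P hP => (hcoord P hP).1,
    eq_of_agree b d hb hd fun P hP => mul_right_cancel₀ (hy P hP) (hcoord P hP).2⟩

end Interpolation

theorem interpolation_by_single_point_general
    (F : Type*) [Field F] (Ω : Type*) [Field Ω] [Algebra F Ω]
    (ℓ : ℕ) (hℓ : ℓ.Prime)
    (h : Polynomial F)
    (hsep : Squarefree (h.map (algebraMap F Ω)))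
    (hsplit : (h.map (algebraMap F Ω)).roots.card = h.natDegree)
    (A : Type*) [AddCommGroup A] (hA : Nat.card A = ℓ)
    (ι : A → Ω × Ω)
    (hy : ∀ P : A, P ≠ 0 → (ι P).2 ≠ 0)
    (hcover : ∀ z : Ω, Polynomial.aeval z h = 0 → ∃ P : A, P ≠ 0 ∧ (ι P).1 = z)
    (B : Type*) [AddCommGroup B] (ιB : B → Ω × Ω)
    (hBneg : ∀ Q : B, ιB (-Q) = ((ιB Q).1, -(ιB Q).2))
    (hBx : ∀ Q R : B, Q ≠ 0 → R ≠ 0 → (ιB Q).1 = (ιB R).1 → Q = R ∨ Q = -R)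
    (φ ρ : A →+ B)
    (hφ0 : ∀ P : A, P ≠ 0 → φ P ≠ 0) (hρ0 : ∀ P : A, P ≠ 0 → ρ P ≠ 0)
    (a b c d : Polynomial F)
    (ha : a.degree < h.degree) (hb : b.degree < h.degree)
    (hc : c.degree < h.degree) (hd : d.degree < h.degree)
    (hφint : ∀ P : A, P ≠ 0 →
      ιB (φ P) = (Polynomial.aeval (ι P).1 a, Polynomial.aeval (ι P).1 b * (ι P).2))
    (hρint : ∀ P : A, P ≠ 0 →
      ιB (ρ P) = (Polynomial.aeval (ι P).1 c, Polynomial.aeval (ι P).1 d * (ι P).2)) :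
    ((∃ P : A, P ≠ 0 ∧ Polynomial.aeval (ι P).1 a = Polynomial.aeval (ι P).1 c) →
      a = c ∧ (b = d ∨ b = -d)) ∧
    (¬ h ∣ (a - c) →
      IsUnit (Ideal.Quotient.mk (Ideal.span ({h} : Set (Polynomial F))) (a - c))) := by
  have : Fact ℓ.Prime := ⟨hℓ⟩
  have hh : h ≠ 0 := (Polynomial.map_ne_zero_iff (algebraMap F Ω).injective).mp hsep.ne_zero
  have hsplits : Splits (h.map (algebraMap F Ω)) :=
    splits_iff_card_roots.mpr (hsplit.trans (natDegree_map _).symm)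
  have hφ : Interpolates ι ιB φ a b := hφint
  have hρ : Interpolates ι ιB ρ c d := hρint
  have of_single_point : (∃ P : A, P ≠ 0 ∧ aeval (ι P).1 a = aeval (ι P).1 c) →
      a = c ∧ (b = d ∨ b = -d) := by
    rintro ⟨P, hP, hac⟩
    rcases hBx _ _ (hφ0 P hP) (hρ0 P hP) (by rw [hφ P hP, hρ P hP]; exact hac) with hPeq | hPeq
    · obtain rfl := AddMonoidHom.eq_of_apply_eq_of_prime_card hA hP hPeq
      exact (hφ.unique hsep hsplits hcover hy ha hb hc hd hρ).imp_right Or.inl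
    · obtain rfl := AddMonoidHom.eq_of_apply_eq_of_prime_card (ρ := -ρ) hA hP hPeq
      exact (hφ.unique hsep hsplits hcover hy ha hb hc (degree_neg d ▸ hd)
        (hρ.neg hBneg)).imp_right Or.inr
  refine ⟨of_single_point, fun hndvd => IsCoprime.isUnit_quotient_mk_span_singleton ?_⟩
  refine isCoprime_of_forall_aeval_ne_zero hh hsplits fun z hz hac => hndvd ?_
  obtain ⟨P, hP, rfl⟩ := hcover z hz
  rw [(of_single_point ⟨P, hP, by rwa [map_sub, sub_eq_zero] at hac⟩).1, sub_self]
  exact dvd_zero h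

/-- Restrictions to the kernel of an odd-prime-degree isogeny `ψ` of `E`.
The kernel is modeled as an abelian group `A` of order `ℓ` (odd prime) with coordinate
map `ι : A → Ω × Ω` on nonzero points, the target curve's points as `B` with coordinate
map `ιB`; `φ ρ : A →+ B` are the restrictions of two isogenies, vanishing nowhere on
`A \ {0}`, with interpolating polynomials `(a, b)` and `(c, d)` of degree `< deg h`.
CONTEXT hypotheses: `x(φ P) = x(ρ P) → φ P = ±ρ P` (`hBx`), negation acts by `y ↦ −y`
(`hBneg`), nonzero points are determined by their coordinates (`hBinj`), kernel points
have `h(x_P) = 0` and `y_P ≠ 0`, every root of the separable, split polynomial `h`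
arises from a kernel point.
Conclusions: if `a(x_P) = c(x_P)` at a single nonzero `P`, then `a = c` and `b = ±d`;
moreover if `h ∤ a − c` (i.e. `a ≠ c` in `𝔽_q[x]/(h)`), then `a − c` is invertible in
`𝔽_q[x]/(h)`. -/
theorem interpolation_by_single_point
    (F : Type*) [Field F] (Ω : Type*) [Field Ω] [Algebra F Ω]
    (ℓ : ℕ) (hℓ : ℓ.Prime) (hodd : Odd ℓ)
    (h : Polynomial F) (hne : 0 < h.natDegree)
    (hsep : Squarefree (h.map (algebraMap F Ω)))
    (hsplit : (h.map (algebraMap F Ω)).roots.card = h.natDegree)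
    (A : Type*) [AddCommGroup A] (hA : Nat.card A = ℓ)
    (ι : A → Ω × Ω)
    (hx : ∀ P : A, P ≠ 0 → Polynomial.aeval (ι P).1 h = 0)
    (hy : ∀ P : A, P ≠ 0 → (ι P).2 ≠ 0)
    (hcover : ∀ z : Ω, Polynomial.aeval z h = 0 → ∃ P : A, P ≠ 0 ∧ (ι P).1 = z)
    (B : Type*) [AddCommGroup B] (ιB : B → Ω × Ω)
    (hBneg : ∀ Q : B, ιB (-Q) = ((ιB Q).1, -(ιB Q).2))
    (hBinj : ∀ Q R : B, Q ≠ 0 → R ≠ 0 → ιB Q = ιB R → Q = R)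
    (hBx : ∀ Q R : B, Q ≠ 0 → R ≠ 0 → (ιB Q).1 = (ιB R).1 → Q = R ∨ Q = -R)
    (φ ρ : A →+ B)
    (hφ0 : ∀ P : A, P ≠ 0 → φ P ≠ 0) (hρ0 : ∀ P : A, P ≠ 0 → ρ P ≠ 0)
    (a b c d : Polynomial F)
    (ha : a.degree < h.degree) (hb : b.degree < h.degree)
    (hc : c.degree < h.degree) (hd : d.degree < h.degree)
    (hφint : ∀ P : A, P ≠ 0 →
      ιB (φ P) = (Polynomial.aeval (ι P).1 a, Polynomial.aeval (ι P).1 b * (ι P).2))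
    (hρint : ∀ P : A, P ≠ 0 →
      ιB (ρ P) = (Polynomial.aeval (ι P).1 c, Polynomial.aeval (ι P).1 d * (ι P).2)) :
    ((∃ P : A, P ≠ 0 ∧ Polynomial.aeval (ι P).1 a = Polynomial.aeval (ι P).1 c) →
      a = c ∧ (b = d ∨ b = -d)) ∧
    (¬ h ∣ (a - c) →
      IsUnit (Ideal.Quotient.mk (Ideal.span ({h} : Set (Polynomial F))) (a - c))) :=
  interpolation_by_single_point_general F Ω ℓ hℓ h hsep hsplit A hA ι hy hcover B ιB hBneg hBx φ ρ
    hφ0 hρ0 a b c d ha hb hc hd hφint hρint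
end

section
/- Let E be a supersingular elliptic curve over F_q of characteristic p > 3 and α ∈ End(E). Let a_α ∈ F_{p²} be the scalar by which α acts on the invariant differential (a_α = 0 if α is inseparable). Then tr(α) ≡ a_α + a_α^p (mod p), i.e., the trace of α is congruent mod p to the field trace of a_α from F_{p²} to F_p. -/
open Polynomial in
lemma exists_zmod_cast_of_pow_card_eq {p : ℕ} (hp : p.Prime)
    {F : Type*} [Field F] [CharP F p] {a : F} (ha : a ^ p = a) :
    ∃ r : ZMod p, ZMod.castHom dvd_rfl F r = a := by
  classical
  haveI : Fact p.Prime := ⟨hp⟩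
  set f : ZMod p →+* F := ZMod.castHom dvd_rfl F with hf
  have hinj : Function.Injective f := f.injective
  set q : F[X] := X ^ p - X with hq
  have hqne : q ≠ 0 := FiniteField.X_pow_card_sub_X_ne_zero F hp.one_lt
  have hdeg : q.natDegree = p := FiniteField.X_pow_card_sub_X_natDegree_eq F hp.one_lt
  set S : Finset F := Finset.univ.image f with hS
  have hScard : S.card = p := by
    rw [hS, Finset.card_image_of_injective _ hinj, Finset.card_univ, ZMod.card]
  have hSsub : S ⊆ q.roots.toFinset := by
    intro x hx
    rw [hS, Finset.mem_image] at hx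
    obtain ⟨r, -, rfl⟩ := hx
    rw [Multiset.mem_toFinset, Polynomial.mem_roots hqne]
    simp [hq, Polynomial.IsRoot, ← map_pow, ZMod.pow_card]
  have hcardle : q.roots.toFinset.card ≤ p := by
    calc q.roots.toFinset.card ≤ Multiset.card q.roots := q.roots.toFinset_card_le
      _ ≤ q.natDegree := q.card_roots'
      _ = p := hdeg
  have hSeq : S = q.roots.toFinset :=
    Finset.eq_of_subset_of_card_le hSsub (hcardle.trans_eq hScard.symm)
  have haroot : a ∈ q.roots.toFinset := by
    rw [Multiset.mem_toFinset, Polynomial.mem_roots hqne]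
    simp [hq, Polynomial.IsRoot, ha]
  rw [← hSeq, hS, Finset.mem_image] at haroot
  obtain ⟨r, -, hr⟩ := haroot
  exact ⟨r, hr⟩



/-- Let `E` be a supersingular elliptic curve over a field of
characteristic `p > 3` and `α ∈ End(E)`.  Let `a_α = w α ∈ 𝔽_{p²}` be the scalar by
which `α` acts on the invariant differential (`w` a ring homomorphism `End(E) → 𝔽_{p²}`;
`a_α = 0` when `α` is inseparable).  CONTEXT: `α + α̂ = [tr α]`, `α·α̂ = [deg α]`, and
since `E` is supersingular `p` does not split in `ℤ[α]` when `α ∉ ℤ`: the characteristic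
polynomial `x² − tr(α)x + deg(α)` has at most one root mod `p` (`hss`).
Then `tr(α) ≡ a_α + a_α^p (mod p)`: the trace of `α` is congruent mod `p` to the field
trace of `a_α` from `𝔽_{p²}` to `𝔽_p`. -/
theorem trace_eq_field_trace_of_differential_scalar
    (p : ℕ) (hp : p.Prime) (hp3 : 3 < p)
    (F : Type*) [Field F] [CharP F p] (hFcard : Nat.card F = p ^ 2)
    (R : Type*) [Ring R] (w : R →+* F)
    (α αhat : R) (t d : ℤ)
    (hsum : α + αhat = (t : R)) (hprod : α * αhat = (d : R))
    (hss : (∃ m : ℤ, α = (m : R) ∧ αhat = α) ∨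
      (∀ r₁ r₂ : ZMod p,
        r₁ ^ 2 - (t : ZMod p) * r₁ + (d : ZMod p) = 0 →
        r₂ ^ 2 - (t : ZMod p) * r₂ + (d : ZMod p) = 0 → r₁ = r₂)) :
    (t : F) = w α + (w α) ^ p := by
  haveI : Fact p.Prime := ⟨hp⟩
  set a : F := w α with haa
  set b : F := w αhat with hbb
  have hab1 : a + b = (t : F) := by
    rw [haa, hbb, ← map_add, hsum, map_intCast]
  have hab2 : a * b = (d : F) := by
    rw [haa, hbb, ← map_mul, hprod, map_intCast]
  -- Frobenius facts
  have hfrob : ∀ x : F, frobenius F p x = x ^ p := fun x => rfl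
  rcases hss with ⟨m, hm, hhat⟩ | huniq
  · -- α is an integer: a = (m : F), fixed by Frobenius
    have hba : b = a := by rw [hbb, hhat]
    have ham : a = (m : F) := by rw [haa, hm, map_intCast]
    have hap : a ^ p = a := by
      have h1 : a ^ p = frobenius F p a := rfl
      rw [h1, ham, map_intCast]
    rw [← hab1, hba, hap]
  · -- a is a root of x² - t x + d
    have hra : a ^ 2 - (t : F) * a + (d : F) = 0 := by
      rw [← hab1, ← hab2]; ring
    have hrap : (a ^ p) ^ 2 - (t : F) * a ^ p + (d : F) = 0 := by
      have h1 := congrArg (frobenius F p) hra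
      rw [map_add, map_sub, map_mul, map_pow, map_intCast, map_intCast, map_zero,
        hfrob] at h1
      exact h1
    have hsplit : (a ^ p - a) * (a ^ p - b) = 0 := by
      have : (a ^ p - a) * (a ^ p - b) = (a ^ p) ^ 2 - (a + b) * a ^ p + a * b := by ring
      rw [this, hab1, hab2, hrap]
    rcases mul_eq_zero.mp hsplit with h | h
    · -- a^p = a : a is in the prime field
      have hap : a ^ p = a := sub_eq_zero.mp h
      have hbp : b ^ p = b := by
        have hb : b = (t : F) - a := by rw [← hab1]; ring
        have : b ^ p = frobenius F p b := rfl
        rw [this, hb, map_sub, map_intCast, hfrob, hap]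
      obtain ⟨r₁, hr₁⟩ := exists_zmod_cast_of_pow_card_eq hp hap
      obtain ⟨r₂, hr₂⟩ := exists_zmod_cast_of_pow_card_eq hp hbp
      set f : ZMod p →+* F := ZMod.castHom dvd_rfl F
      have hinj : Function.Injective f := f.injective
      have hq₁ : r₁ ^ 2 - (t : ZMod p) * r₁ + (d : ZMod p) = 0 := by
        apply hinj
        rw [map_add, map_sub, map_mul, map_pow, map_intCast, map_intCast, hr₁, map_zero]
        exact hra
      have hq₂ : r₂ ^ 2 - (t : ZMod p) * r₂ + (d : ZMod p) = 0 := by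
        apply hinj
        rw [map_add, map_sub, map_mul, map_pow, map_intCast, map_intCast, hr₂, map_zero]
        have : b ^ 2 - (t : F) * b + (d : F) = 0 := by
          have hb : b = (t : F) - a := by rw [← hab1]; ring
          rw [hb]; linear_combination hra
        exact this
      have : r₁ = r₂ := huniq r₁ r₂ hq₁ hq₂
      have hab : a = b := by rw [← hr₁, ← hr₂, this]
      rw [← hab1, ← hab, hap]
    · have hap : a ^ p = b := sub_eq_zero.mp h
      rw [← hab1, hap]
end
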